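/- Let U : ℝ → ℝ satisfy U'' + cU' + U(1-U) = 0, and suppose there exist C > 0, μ > 0 with |U'(z)| ≤ C e^{-μ|z|} for all z. Fix constants N > 0, d₀ > 0, m₁ > 0, m₂ ≥ 2N(2/(m₁ μ) + 1), and T > 0, and suppose d : [0,T] × ℝ^N → ℝ satisfies |d| ≤ 2d₀ and |∂_t d + c| ≤ N|d|. Then for all sufficiently small ε > 0 and all (t,x) ∈ [0,T] × ℝ^N with d(t,x) < -(m₂/(2N)) ε|ln ε| m₁ e^{m₂ t}, writing θ := (d(t,x) + ε|ln ε| m₁ e^{m₂ t})/ε, one has U'(θ)·(∂_t d(t,x) + c + m₂ ε|ln ε| m₁ e^{m₂ t}) ≤ 3CN d₀ · ε^{m₁ μ (m₂/(2N) - 1)} ≤ 3CN d₀ · ε². -/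

import Mathlib

/-!
Put `θ = (d + A) / ε` with `A = ε |ln ε| m₁ e^{m₂ t}`. In the far field `d < -(m₂/(2N)) A`, so
`|θ| ≥ (m₂/(2N) - 1) m₁ |ln ε|` and the decay `|U'(θ)| ≤ C e^{-μ|θ|}` becomes
`|U'(θ)| ≤ C ε^{m₁ μ (m₂/(2N) - 1)}`. The other factor is at most `3 N d₀`: `2 N d₀` from the
velocity bound and `N d₀` from `m₂ A`, which is small because `ε |ln ε| → 0`. The choice of `m₂`
makes the exponent at least `2`.
-/

open Real Filter Topology

lemma exists_pos_forall_mul_abs_log_lt {δ : ℝ} (hδ : 0 < δ) :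
    ∃ ε₀ > 0, ∀ ε : ℝ, 0 < ε → ε < ε₀ → ε * |log ε| < δ := by
  have hlim : ∀ᶠ ε in 𝓝 (0 : ℝ), |ε * log ε| < δ := by
    have h := continuous_mul_log.abs.tendsto 0
    rw [zero_mul, abs_zero] at h
    exact h.eventually (gt_mem_nhds hδ)
  obtain ⟨ε₀, hε₀, hball⟩ := Metric.eventually_nhds_iff.1 hlim
  refine ⟨ε₀, hε₀, fun ε hε hεε₀ => ?_⟩
  have h := hball (by rwa [Real.dist_0_eq_abs, abs_of_pos hε])
  rwa [abs_mul, abs_of_pos hε] at h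

lemma exp_neg_le_rpow_of_mul_abs_log_le {ε p s : ℝ} (hε : 0 < ε) (hε1 : ε ≤ 1)
    (h : p * |log ε| ≤ s) : exp (-s) ≤ ε ^ p := by
  rw [abs_of_nonpos (log_nonpos hε.le hε1)] at h
  rw [rpow_def_of_pos hε, exp_le_exp]
  linarith

lemma le_abs_add_div_of_lt_neg_mul {d A ε r : ℝ} (hε : 0 < ε) (hr : 1 ≤ r) (hA : 0 ≤ A)
    (hd : d < -r * A) : (r - 1) * (A / ε) ≤ |(d + A) / ε| := by
  have hdA : d + A ≤ -((r - 1) * A) := by linarith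
  have hrA : 0 ≤ (r - 1) * A := mul_nonneg (by linarith) hA
  rw [abs_div, abs_of_pos hε, abs_of_nonpos (by linarith), ← mul_div_assoc]
  exact div_le_div_of_nonneg_right (by linarith) hε.le

lemma two_le_mul_div_sub_one {a b m : ℝ} (ha : 0 < a) (hb : 0 < b) (hm : b * (2 / a + 1) ≤ m) :
    2 ≤ a * (m / b - 1) := by
  have h : 2 / a + 1 ≤ m / b := by rwa [le_div_iff₀ hb, mul_comm]
  calc (2 : ℝ) = a * (2 / a) := by field_simp
    _ ≤ a * (m / b - 1) := by gcongr; linarith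

lemma abs_add_le_three_mul {v s δ N d₀ : ℝ} (hN : 0 ≤ N) (hv : |v| ≤ N * |δ|)
    (hδ : |δ| ≤ 2 * d₀) (hs : 0 ≤ s) (hs' : s ≤ N * d₀) : |v + s| ≤ 3 * N * d₀ := by
  have hNδ : N * |δ| ≤ N * (2 * d₀) := mul_le_mul_of_nonneg_left hδ hN
  calc |v + s| ≤ |v| + |s| := abs_add_le v s
    _ ≤ 3 * N * d₀ := by rw [abs_of_nonneg hs]; linarith

lemma le_abs_far_field_shift {ε r m₁ m₂ t d : ℝ} (hε : 0 < ε) (hr : 1 ≤ r) (hm₁ : 0 < m₁)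
    (hm₂t : 0 ≤ m₂ * t) (hd : d < -r * (ε * |log ε| * m₁ * exp (m₂ * t))) :
    (r - 1) * (|log ε| * m₁) ≤ |(d + ε * |log ε| * m₁ * exp (m₂ * t)) / ε| := by
  refine le_trans ?_ (le_abs_add_div_of_lt_neg_mul hε hr (by positivity) hd)
  gcongr
  rw [show ε * |log ε| * m₁ * exp (m₂ * t) / ε = |log ε| * m₁ * exp (m₂ * t) by field_simp]
  exact le_mul_of_one_le_right (by positivity) (one_le_exp hm₂t)

lemma mul_shift_le_of_mul_abs_log_lt {ε m₁ m₂ t T B : ℝ} (hε : 0 ≤ ε) (hm₁ : 0 < m₁)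
    (hm₂ : 0 < m₂) (ht : t ≤ T) (hεB : ε * |log ε| < B / (m₂ * m₁ * exp (m₂ * T))) :
    m₂ * (ε * |log ε| * m₁ * exp (m₂ * t)) ≤ B := by
  rw [lt_div_iff₀ (by positivity)] at hεB
  have hexp : exp (m₂ * t) ≤ exp (m₂ * T) := exp_le_exp.2 (by gcongr)
  calc m₂ * (ε * |log ε| * m₁ * exp (m₂ * t)) = m₂ * m₁ * exp (m₂ * t) * (ε * |log ε|) := by ring
    _ ≤ m₂ * m₁ * exp (m₂ * T) * (ε * |log ε|) := by gcongr
    _ ≤ B := by linarith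

theorem far_field_E1_estimate_general (Nd : ℕ)
    (U : ℝ → ℝ) (c : ℝ)
    (C μ : ℝ) (hC : 0 < C) (hμ : 0 < μ)
    (hU' : ∀ z : ℝ, |deriv U z| ≤ C * Real.exp (-μ * |z|))
    (N d₀ m₁ m₂ T : ℝ) (hN : 0 < N) (hd₀ : 0 < d₀) (hm₁ : 0 < m₁)
    (hm₂ : 2 * N * (2 / (m₁ * μ) + 1) ≤ m₂)
    (d : ℝ → EuclideanSpace ℝ (Fin Nd) → ℝ)
    (hd_bdd : ∀ t ∈ Set.Icc (0:ℝ) T, ∀ x, |d t x| ≤ 2 * d₀)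
    (hd_vel : ∀ t ∈ Set.Icc (0:ℝ) T, ∀ x,
      |deriv (fun τ => d τ x) t + c| ≤ N * |d t x|) :
    ∃ ε₀ : ℝ, 0 < ε₀ ∧ ∀ ε : ℝ, 0 < ε → ε < ε₀ → ε < 1 →
      ∀ t ∈ Set.Icc (0:ℝ) T, ∀ x : EuclideanSpace ℝ (Fin Nd),
        d t x < -(m₂ / (2 * N)) * (ε * |Real.log ε| * m₁ * Real.exp (m₂ * t)) →
        deriv U ((d t x + ε * |Real.log ε| * m₁ * Real.exp (m₂ * t)) / ε) *
            (deriv (fun τ => d τ x) t + c + m₂ * (ε * |Real.log ε| * m₁ * Real.exp (m₂ * t)))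
          ≤ 3 * C * N * d₀ * ε ^ (m₁ * μ * (m₂ / (2 * N) - 1)) ∧
        3 * C * N * d₀ * ε ^ (m₁ * μ * (m₂ / (2 * N) - 1)) ≤ 3 * C * N * d₀ * ε ^ (2:ℝ) := by
  have hm₂pos : 0 < m₂ := lt_of_lt_of_le (by positivity) hm₂
  have hp : 2 ≤ m₁ * μ * (m₂ / (2 * N) - 1) :=
    two_le_mul_div_sub_one (mul_pos hm₁ hμ) (by positivity) hm₂
  have hr : 1 ≤ m₂ / (2 * N) := by nlinarith [mul_pos hm₁ hμ]
  obtain ⟨ε₀, hε₀, hsmall⟩ :=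
    exists_pos_forall_mul_abs_log_lt (δ := N * d₀ / (m₂ * m₁ * exp (m₂ * T))) (by positivity)
  refine ⟨ε₀, hε₀, fun ε hε hεε₀ hε1 t ht x hdx => ?_⟩
  set A := ε * |log ε| * m₁ * exp (m₂ * t)
  set θ := (d t x + A) / ε
  have hfar : m₁ * μ * (m₂ / (2 * N) - 1) * |log ε| ≤ μ * |θ| :=
    calc _ = μ * ((m₂ / (2 * N) - 1) * (|log ε| * m₁)) := by ring
      _ ≤ μ * |θ| := by
        gcongr
        exact le_abs_far_field_shift hε hr hm₁ (by nlinarith [ht.1]) hdx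
  have hdecay : |deriv U θ| ≤ C * ε ^ (m₁ * μ * (m₂ / (2 * N) - 1)) := by
    refine (hU' θ).trans (mul_le_mul_of_nonneg_left ?_ hC.le)
    rw [neg_mul]
    exact exp_neg_le_rpow_of_mul_abs_log_le hε hε1.le hfar
  have hfactor : |deriv (fun τ => d τ x) t + c + m₂ * A| ≤ 3 * N * d₀ :=
    abs_add_le_three_mul hN.le (hd_vel t ht x) (hd_bdd t ht x) (by positivity)
      (mul_shift_le_of_mul_abs_log_lt hε.le hm₁ hm₂pos ht.2 (hsmall ε hε hεε₀))
  refine ⟨?_, mul_le_mul_of_nonneg_left (rpow_le_rpow_of_exponent_ge hε hε1.le hp) (by positivity)⟩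
  calc _ ≤ |deriv U θ| * |deriv (fun τ => d τ x) t + c + m₂ * A| :=
        (le_abs_self _).trans (abs_mul _ _).le
    _ ≤ C * ε ^ (m₁ * μ * (m₂ / (2 * N) - 1)) * (3 * N * d₀) :=
        mul_le_mul hdecay hfactor (abs_nonneg _) (by positivity)
    _ = _ := by ring

theorem far_field_E1_estimate (Nd : ℕ)
    (U : ℝ → ℝ) (c : ℝ)
    (hTW : ∀ z : ℝ, deriv (deriv U) z + c * deriv U z + U z * (1 - U z) = 0)
    (C μ : ℝ) (hC : 0 < C) (hμ : 0 < μ)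
    (hU' : ∀ z : ℝ, |deriv U z| ≤ C * Real.exp (-μ * |z|))
    (N d₀ m₁ m₂ T : ℝ) (hN : 0 < N) (hd₀ : 0 < d₀) (hm₁ : 0 < m₁)
    (hm₂ : 2 * N * (2 / (m₁ * μ) + 1) ≤ m₂) (hT : 0 < T)
    (d : ℝ → EuclideanSpace ℝ (Fin Nd) → ℝ)
    (hd_bdd : ∀ t ∈ Set.Icc (0:ℝ) T, ∀ x, |d t x| ≤ 2 * d₀)
    (hd_vel : ∀ t ∈ Set.Icc (0:ℝ) T, ∀ x,
      |deriv (fun τ => d τ x) t + c| ≤ N * |d t x|) :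
    ∃ ε₀ : ℝ, 0 < ε₀ ∧ ∀ ε : ℝ, 0 < ε → ε < ε₀ → ε < 1 →
      ∀ t ∈ Set.Icc (0:ℝ) T, ∀ x : EuclideanSpace ℝ (Fin Nd),
        d t x < -(m₂ / (2 * N)) * (ε * |Real.log ε| * m₁ * Real.exp (m₂ * t)) →
        deriv U ((d t x + ε * |Real.log ε| * m₁ * Real.exp (m₂ * t)) / ε) *
            (deriv (fun τ => d τ x) t + c + m₂ * (ε * |Real.log ε| * m₁ * Real.exp (m₂ * t)))
          ≤ 3 * C * N * d₀ * ε ^ (m₁ * μ * (m₂ / (2 * N) - 1)) ∧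
        3 * C * N * d₀ * ε ^ (m₁ * μ * (m₂ / (2 * N) - 1)) ≤ 3 * C * N * d₀ * ε ^ (2:ℝ) :=
  far_field_E1_estimate_general Nd U c C μ hC hμ hU' N d₀ m₁ m₂ T hN hd₀ hm₁ hm₂ d hd_bdd hd_vel
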